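/- Let F be a field, P ∈ F[λ]^{m×n} with normal rank r > 0, and let P = L E R be a rank factorization of P. Let R_m ∈ F[λ]^{r×n} be a matrix whose rows form a minimal basis of Row(P) and let ρ_max be the largest row degree of R_m (i.e., the largest minimal index of Row(P)); let L_m ∈ F[λ]^{m×r} be a matrix whose columns form a minimal basis of Col(P) and let c_max be the largest column degree of L_m (i.e., the largest minimal index of Col(P)). Then deg(L) + deg(E) + deg(R) ≥ deg(L) + deg(R) ≥ ρ_max + c_max. Consequently, if ρ_max + c_max > deg(P), then no rank factorization of P, with three or two factors, satisfies that the sum of the degrees of the factors equals the degree of P. -/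

import Mathlib

open Polynomial Matrix

noncomputable section

variable {F : Type*} [Field F]

/-- The matrix over the field of rational functions associated with a polynomial matrix. -/
def toRat {m n : ℕ} (P : Matrix (Fin m) (Fin n) F[X]) : Matrix (Fin m) (Fin n) (RatFunc F) :=
  P.map (algebraMap F[X] (RatFunc F))

/-- The normal rank of a polynomial matrix: its rank over the field of rational functions. -/
def normalRank {m n : ℕ} (P : Matrix (Fin m) (Fin n) F[X]) : ℕ := (toRat P).rank

/-- The degree of a polynomial matrix: the maximum of the degrees of its entries,
`⊥` (i.e. -∞) for the zero matrix. -/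
def matDeg {m n : ℕ} (P : Matrix (Fin m) (Fin n) F[X]) : WithBot ℕ :=
  Finset.univ.sup fun i : Fin m => Finset.univ.sup fun j : Fin n => (P i j).degree

/-- Degree of the i-th row. -/
def rowDeg {m n : ℕ} (P : Matrix (Fin m) (Fin n) F[X]) (i : Fin m) : WithBot ℕ :=
  Finset.univ.sup fun j : Fin n => (P i j).degree

/-- Degree of the j-th column. -/
def colDeg {m n : ℕ} (P : Matrix (Fin m) (Fin n) F[X]) (j : Fin n) : WithBot ℕ :=
  Finset.univ.sup fun i : Fin m => (P i j).degree

/-- Degree of the i-th row as a natural number (0 for a zero row). -/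
def rowDegNat {m n : ℕ} (P : Matrix (Fin m) (Fin n) F[X]) (i : Fin m) : ℕ :=
  Finset.univ.sup fun j : Fin n => (P i j).natDegree

/-- Degree of the j-th column as a natural number (0 for a zero column). -/
def colDegNat {m n : ℕ} (P : Matrix (Fin m) (Fin n) F[X]) (j : Fin n) : ℕ :=
  Finset.univ.sup fun i : Fin m => (P i j).natDegree

/-- Highest-row-degree coefficient matrix. -/
def hrMatrix {m n : ℕ} (P : Matrix (Fin m) (Fin n) F[X]) : Matrix (Fin m) (Fin n) F :=
  Matrix.of fun i j => (P i j).coeff (rowDegNat P i)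

/-- Highest-column-degree coefficient matrix. -/
def hcMatrix {m n : ℕ} (P : Matrix (Fin m) (Fin n) F[X]) : Matrix (Fin m) (Fin n) F :=
  Matrix.of fun i j => (P i j).coeff (colDegNat P j)

/-- A polynomial matrix is row reduced if its highest-row-degree coefficient matrix has
full row rank. -/
def RowReduced {m n : ℕ} (P : Matrix (Fin m) (Fin n) F[X]) : Prop := (hrMatrix P).rank = m

/-- A polynomial matrix is column reduced if its highest-column-degree coefficient matrix has
full column rank. -/
def ColReduced {m n : ℕ} (P : Matrix (Fin m) (Fin n) F[X]) : Prop := (hcMatrix P).rank = n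

/-- Evaluation of a polynomial matrix at a point of the algebraic closure. -/
def evalMat {m n : ℕ} (P : Matrix (Fin m) (Fin n) F[X]) (x : AlgebraicClosure F) :
    Matrix (Fin m) (Fin n) (AlgebraicClosure F) :=
  Matrix.of fun i j => aeval x (P i j)

/-- The rows of `P` form a minimal basis of the rational subspace they span (Forney's
characterization): full row rank at every point of the algebraic closure, and row reduced. -/
def IsMinimalRowBasis {m n : ℕ} (P : Matrix (Fin m) (Fin n) F[X]) : Prop :=
  (∀ x : AlgebraicClosure F, (evalMat P x).rank = m) ∧ RowReduced P

/-- The columns of `P` form a minimal basis of the rational subspace they span. -/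
def IsMinimalColBasis {m n : ℕ} (P : Matrix (Fin m) (Fin n) F[X]) : Prop :=
  (∀ x : AlgebraicClosure F, (evalMat P x).rank = n) ∧ ColReduced P

/-- The column space Col(P) over the field of rational functions. -/
def colSpace {m n : ℕ} (P : Matrix (Fin m) (Fin n) F[X]) :
    Submodule (RatFunc F) (Fin m → RatFunc F) :=
  LinearMap.range (toRat P).mulVecLin

/-- The row space Row(P) over the field of rational functions. -/
def rowSpace {m n : ℕ} (P : Matrix (Fin m) (Fin n) F[X]) :
    Submodule (RatFunc F) (Fin n → RatFunc F) :=
  LinearMap.range (toRat P)ᵀ.mulVecLin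

/-- The right nullspace N_r(P). -/
def rightNull {m n : ℕ} (P : Matrix (Fin m) (Fin n) F[X]) :
    Submodule (RatFunc F) (Fin n → RatFunc F) :=
  LinearMap.ker (toRat P).mulVecLin

/-- The left nullspace N_ℓ(P). -/
def leftNull {m n : ℕ} (P : Matrix (Fin m) (Fin n) F[X]) :
    Submodule (RatFunc F) (Fin m → RatFunc F) :=
  LinearMap.ker (toRat P)ᵀ.mulVecLin

/-!
In a rank factorization `P = L * E * R` the `r` rows of `R` span `Row P` and the `r` columns of
`L` span `Col P`. A minimal basis `Rm` of `Row P` has full rank at every point of the algebraic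
closure, so a polynomial vector of `Row P` is a polynomial combination of its rows: denominators
cancel one irreducible factor at a time, by evaluating at a root of that factor. Hence
`R = C * Rm` with `C` polynomial, and no column of `C` vanishes since `R` has rank `r`. As `Rm` is
row reduced, the predictable degree property bounds `deg R` below by every row degree of `Rm`,
so `deg R ≥ deg Rm`; transposing gives `deg L ≥ deg Lm`. Finally `E ≠ 0` as `r > 0`.
-/

section LinearAlgebra

variable {K m n : Type*} [Field K] [Fintype n]

theorem Matrix.mulVec_injective_of_rank_eq_card {M : Matrix m n K}
    (h : M.rank = Fintype.card n) : Function.Injective M.mulVec := by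
  rw [Matrix.mulVec_injective_iff, linearIndependent_iff_card_eq_finrank_span, ← h,
    Matrix.rank_eq_finrank_span_cols]
  rfl

theorem Matrix.vecMul_injective_of_rank_eq_card [Fintype m] {M : Matrix m n K}
    (h : M.rank = Fintype.card m) : Function.Injective M.vecMul := by
  rw [Matrix.vecMul_injective_iff, linearIndependent_iff_card_eq_finrank_span, ← h,
    Matrix.rank_eq_finrank_span_row]
  rfl

end LinearAlgebra

theorem degree_le_matDeg {m n : ℕ} (P : Matrix (Fin m) (Fin n) F[X]) (i : Fin m) (j : Fin n) :
    (P i j).degree ≤ matDeg P :=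
  (Finset.le_sup (f := fun j => (P i j).degree) (Finset.mem_univ j)).trans
    (Finset.le_sup (f := fun i => Finset.univ.sup fun j => (P i j).degree) (Finset.mem_univ i))

theorem matDeg_le_iff {m n : ℕ} {P : Matrix (Fin m) (Fin n) F[X]} {d : WithBot ℕ} :
    matDeg P ≤ d ↔ ∀ i j, (P i j).degree ≤ d := by
  simp only [matDeg, Finset.sup_le_iff, Finset.mem_univ, true_implies]

theorem matDeg_transpose {m n : ℕ} (P : Matrix (Fin m) (Fin n) F[X]) :
    matDeg Pᵀ = matDeg P :=
  Finset.sup_comm _ _ _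

theorem natDegree_le_rowDegNat {m n : ℕ} (P : Matrix (Fin m) (Fin n) F[X]) (i : Fin m)
    (j : Fin n) : (P i j).natDegree ≤ rowDegNat P i :=
  Finset.le_sup (f := fun j => (P i j).natDegree) (Finset.mem_univ j)

theorem zero_le_matDeg_of_normalRank_pos {m n : ℕ} {P : Matrix (Fin m) (Fin n) F[X]}
    (hP : 0 < normalRank P) : 0 ≤ matDeg P := by
  obtain ⟨i, j, hij⟩ : ∃ i j, P i j ≠ 0 := by
    by_contra! h
    have hP0 : P = 0 := Matrix.ext h
    simp [hP0, normalRank, toRat] at hP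
  exact (zero_le_degree_iff.2 hij).trans (degree_le_matDeg P i j)

theorem toRat_mul {m n p : ℕ} (A : Matrix (Fin m) (Fin n) F[X])
    (B : Matrix (Fin n) (Fin p) F[X]) : toRat (A * B) = toRat A * toRat B :=
  Matrix.map_mul

theorem normalRank_mul_le_left {m n p : ℕ} (A : Matrix (Fin m) (Fin n) F[X])
    (B : Matrix (Fin n) (Fin p) F[X]) : normalRank (A * B) ≤ normalRank A := by
  rw [normalRank, toRat_mul]
  exact Matrix.rank_mul_le_left _ _

theorem normalRank_mul_le_right {m n p : ℕ} (A : Matrix (Fin m) (Fin n) F[X])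
    (B : Matrix (Fin n) (Fin p) F[X]) : normalRank (A * B) ≤ normalRank B := by
  rw [normalRank, toRat_mul]
  exact Matrix.rank_mul_le_right _ _

theorem normalRank_transpose {m n : ℕ} (A : Matrix (Fin m) (Fin n) F[X]) :
    normalRank Aᵀ = normalRank A :=
  Matrix.rank_transpose _

theorem finrank_rowSpace {m n : ℕ} (A : Matrix (Fin m) (Fin n) F[X]) :
    Module.finrank (RatFunc F) (rowSpace A) = normalRank A := by
  rw [normalRank, ← Matrix.rank_transpose]
  rfl

theorem rowSpace_transpose {m n : ℕ} (A : Matrix (Fin m) (Fin n) F[X]) :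
    rowSpace Aᵀ = colSpace A := rfl

theorem rowSpace_mul_eq_of_normalRank_eq {m n r : ℕ} (A : Matrix (Fin m) (Fin r) F[X])
    (B : Matrix (Fin r) (Fin n) F[X]) (h : normalRank (A * B) = r) :
    rowSpace (A * B) = rowSpace B := by
  refine Submodule.eq_of_le_of_finrank_le ?_ ?_
  · rw [rowSpace, rowSpace, toRat_mul, Matrix.transpose_mul, Matrix.mulVecLin_mul]
    exact LinearMap.range_comp_le_range _ _
  · rw [finrank_rowSpace, finrank_rowSpace, h]
    exact Matrix.rank_le_height _

theorem row_mem_rowSpace {m n : ℕ} (A : Matrix (Fin m) (Fin n) F[X]) (i : Fin m) :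
    (fun k => algebraMap F[X] (RatFunc F) (A i k)) ∈ rowSpace A :=
  ⟨Pi.single i 1, by ext k; simp [toRat]⟩

theorem RowReduced.exists_le_degree_vecMul {r n : ℕ} {M : Matrix (Fin r) (Fin n) F[X]}
    (hM : RowReduced M) {c : Fin r → F[X]} {j₀ : Fin r} (hc : c j₀ ≠ 0) :
    ∃ k, ((c j₀).natDegree + rowDegNat M j₀ : WithBot ℕ) ≤ ((c ᵥ* M) k).degree := by
  classical
  set d : Fin r → ℕ := fun j => (c j).natDegree + rowDegNat M j
  set N := (Finset.univ.filter fun j => c j ≠ 0).sup d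
  have hd_le : ∀ j, c j ≠ 0 → d j ≤ N := fun j hj => Finset.le_sup (by simpa using hj)
  -- `N` is the degree predicted for `c ᵥ* M`; its `X ^ N`-coefficient is `w ᵥ* hrMatrix M`
  set w : Fin r → F := fun j => (c j).coeff (N - rowDegNat M j)
  have hcoeff : ∀ k, ((c ᵥ* M) k).coeff N = (w ᵥ* hrMatrix M) k := by
    intro k
    simp only [Matrix.vecMul, dotProduct, finsetSum_coeff, hrMatrix, Matrix.of_apply]
    refine Finset.sum_congr rfl fun j _ => ?_
    by_cases hj : c j = 0
    · simp [hj, w]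
    · have hdj : (c j).natDegree + rowDegNat M j ≤ N := hd_le j hj
      rw [← coeff_mul_add_eq_of_natDegree_le (by omega) (natDegree_le_rowDegNat M j k),
        Nat.sub_add_cancel (by omega)]
  have hw : w ≠ 0 := by
    obtain ⟨j₁, hj₁, hN⟩ := Finset.exists_mem_eq_sup (Finset.univ.filter fun j => c j ≠ 0)
      ⟨j₀, by simpa using hc⟩ d
    have hcj₁ : c j₁ ≠ 0 := by simpa using hj₁
    intro h
    have hlead : (c j₁).coeff (N - rowDegNat M j₁) = 0 := congrFun h j₁
    rw [show N = (c j₁).natDegree + rowDegNat M j₁ from hN, Nat.add_sub_cancel] at hlead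
    exact hcj₁ (leadingCoeff_eq_zero.1 hlead)
  have hwM : w ᵥ* hrMatrix M ≠ 0 := fun h =>
    hw (Matrix.vecMul_injective_of_rank_eq_card (by rw [Fintype.card_fin]; exact hM)
      (h.trans (Matrix.zero_vecMul _).symm))
  obtain ⟨k, hk⟩ := Function.ne_iff.1 hwM
  have hNk : ((c ᵥ* M) k).coeff N ≠ 0 := by rw [hcoeff]; exact hk
  exact ⟨k, (WithBot.coe_le_coe.2 (hd_le j₀ hc)).trans (le_degree_of_ne_zero hNk)⟩

theorem dvd_of_forall_dvd_vecMul {r n : ℕ} {M : Matrix (Fin r) (Fin n) F[X]}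
    (hM : ∀ x : AlgebraicClosure F, (evalMat M x).rank = r) {p : F[X]} (hp : Irreducible p)
    {c : Fin r → F[X]} (hc : ∀ k, p ∣ (c ᵥ* M) k) (j : Fin r) : p ∣ c j := by
  obtain ⟨x, hx⟩ :=
    IsAlgClosed.exists_aeval_eq_zero (AlgebraicClosure F) p (degree_pos_of_irreducible hp).ne'
  have hcx : (fun j => aeval x (c j)) ᵥ* evalMat M x = 0 := by
    funext k
    have hk := (hp.dvd_iff_aeval_eq_zero hx).2 (hc k)
    simpa [Matrix.vecMul, dotProduct, evalMat] using hk
  have hcx₀ := Matrix.vecMul_injective_of_rank_eq_card (by rw [Fintype.card_fin]; exact hM x)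
    (hcx.trans (Matrix.zero_vecMul _).symm)
  exact (hp.dvd_iff_aeval_eq_zero hx).1 (congrFun hcx₀ j)

theorem exists_vecMul_eq_of_vecMul_eq_smul {r n : ℕ} {M : Matrix (Fin r) (Fin n) F[X]}
    (hM : ∀ x : AlgebraicClosure F, (evalMat M x).rank = r) {d : F[X]} (hd : d ≠ 0)
    {c : Fin r → F[X]} {v : Fin n → F[X]} (h : c ᵥ* M = d • v) : ∃ c', c' ᵥ* M = v := by
  induction d using WfDvdMonoid.induction_on_irreducible generalizing c with
  | zero => exact (hd rfl).elim
  | unit u hu =>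
    refine ⟨(↑hu.unit⁻¹ : F[X]) • c, ?_⟩
    rw [Matrix.smul_vecMul, h, smul_smul, hu.val_inv_mul, one_smul]
  | mul a p ha hp ih =>
    choose c₁ hc₁ using dvd_of_forall_dvd_vecMul hM hp (c := c) fun k =>
      ⟨a * v k, by rw [h, Pi.smul_apply, smul_eq_mul, mul_assoc]⟩
    refine ih ha (c := c₁) (funext fun k => mul_left_cancel₀ hp.ne_zero ?_)
    have hk := congrFun h k
    rw [show c = p • c₁ from funext hc₁, Matrix.smul_vecMul] at hk
    simpa [mul_assoc] using hk

theorem exists_vecMul_eq_of_mem_rowSpace {r n : ℕ} {M : Matrix (Fin r) (Fin n) F[X]}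
    (hM : ∀ x : AlgebraicClosure F, (evalMat M x).rank = r) {v : Fin n → F[X]}
    (hv : (fun k => algebraMap F[X] (RatFunc F) (v k)) ∈ rowSpace M) : ∃ c, c ᵥ* M = v := by
  obtain ⟨w, hw⟩ := hv
  obtain ⟨b, hb⟩ := IsLocalization.exist_integer_multiples_of_finite (nonZeroDivisors F[X]) w
  choose c hc using hb
  refine exists_vecMul_eq_of_vecMul_eq_smul hM (nonZeroDivisors.coe_ne_zero b) (c := c) ?_
  funext k
  apply IsFractionRing.injective F[X] (RatFunc F)
  have hwk := congrFun hw k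
  simp only [Matrix.mulVecLin_apply, Matrix.mulVec_transpose] at hwk
  rw [RingHom.map_vecMul, Pi.smul_apply, smul_eq_mul, map_mul, ← hwk,
    show ⇑(algebraMap F[X] (RatFunc F)) ∘ c = (b : F[X]) • w from funext hc,
    Matrix.smul_vecMul, Pi.smul_apply, Algebra.smul_def]
  rfl

theorem exists_eq_mul_of_rowSpace_le {s r n : ℕ} {M : Matrix (Fin r) (Fin n) F[X]}
    (hM : ∀ x : AlgebraicClosure F, (evalMat M x).rank = r) {R : Matrix (Fin s) (Fin n) F[X]}
    (hR : rowSpace R ≤ rowSpace M) : ∃ C : Matrix (Fin s) (Fin r) F[X], R = C * M := by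
  choose C hC using fun i => exists_vecMul_eq_of_mem_rowSpace hM (hR (row_mem_rowSpace R i))
  exact ⟨Matrix.of C, Matrix.ext fun i k => (congrFun (hC i) k).symm⟩

theorem exists_ne_zero_of_normalRank_eq_width {s r : ℕ} {C : Matrix (Fin s) (Fin r) F[X]}
    (hC : normalRank C = r) (j : Fin r) : ∃ i, C i j ≠ 0 := by
  by_contra! h
  have hcol : toRat C *ᵥ Pi.single j 1 = toRat C *ᵥ 0 := by
    ext i
    simp [toRat, Matrix.mulVec_single, h]
  have hj := congrFun
    (Matrix.mulVec_injective_of_rank_eq_card (by rw [Fintype.card_fin]; exact hC) hcol) j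
  simp at hj

theorem RowReduced.matDeg_le_matDeg_mul {s r n : ℕ} {M : Matrix (Fin r) (Fin n) F[X]}
    (hM : RowReduced M) {C : Matrix (Fin s) (Fin r) F[X]} (hC : ∀ j, ∃ i, C i j ≠ 0) :
    matDeg M ≤ matDeg (C * M) := by
  refine matDeg_le_iff.2 fun j k => ?_
  obtain ⟨i, hi⟩ := hC j
  obtain ⟨k', hk'⟩ := hM.exists_le_degree_vecMul hi
  calc (M j k).degree ≤ (M j k).natDegree := degree_le_natDegree
    _ ≤ rowDegNat M j := by exact_mod_cast natDegree_le_rowDegNat M j k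
    _ ≤ ((C i j).natDegree + rowDegNat M j : ℕ) := by exact_mod_cast Nat.le_add_left _ _
    _ ≤ ((C i ᵥ* M) k').degree := hk'
    _ ≤ matDeg (C * M) := degree_le_matDeg (C * M) i k'

theorem IsMinimalRowBasis.matDeg_le_of_rowSpace_eq_mul {m r n : ℕ}
    {M : Matrix (Fin r) (Fin n) F[X]} (hM : IsMinimalRowBasis M)
    {A : Matrix (Fin m) (Fin r) F[X]} {R : Matrix (Fin r) (Fin n) F[X]}
    (hrank : normalRank (A * R) = r) (hspan : rowSpace M = rowSpace (A * R)) :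
    matDeg M ≤ matDeg R := by
  obtain ⟨C, hRC⟩ := exists_eq_mul_of_rowSpace_le (R := R) hM.1
    (by rw [hspan, rowSpace_mul_eq_of_normalRank_eq A _ hrank])
  subst hRC
  have hC : normalRank C = r := le_antisymm (Matrix.rank_le_width _)
    (hrank.symm.le.trans ((normalRank_mul_le_right _ _).trans (normalRank_mul_le_left _ _)))
  exact hM.2.matDeg_le_matDeg_mul (exists_ne_zero_of_normalRank_eq_width hC)

theorem IsMinimalColBasis.transpose {m n : ℕ} {M : Matrix (Fin m) (Fin n) F[X]}
    (hM : IsMinimalColBasis M) : IsMinimalRowBasis Mᵀ :=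
  ⟨fun x => (Matrix.rank_transpose _).trans (hM.1 x), (Matrix.rank_transpose _).trans hM.2⟩

theorem IsMinimalColBasis.matDeg_le_of_colSpace_eq_mul {m r n : ℕ}
    {M : Matrix (Fin m) (Fin r) F[X]} (hM : IsMinimalColBasis M)
    {L : Matrix (Fin m) (Fin r) F[X]} {B : Matrix (Fin r) (Fin n) F[X]}
    (hrank : normalRank (L * B) = r) (hspan : colSpace M = colSpace (L * B)) :
    matDeg M ≤ matDeg L := by
  have h := hM.transpose.matDeg_le_of_rowSpace_eq_mul (A := Bᵀ) (R := Lᵀ)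
    (by rw [← Matrix.transpose_mul, normalRank_transpose, hrank])
    (by rw [← Matrix.transpose_mul, rowSpace_transpose, rowSpace_transpose, hspan])
  rwa [matDeg_transpose, matDeg_transpose] at h

/-- Lower bound for the sum of the degrees of the factors of any rank factorization of P
in terms of the largest minimal indices of Row(P) and Col(P), and its consequence. -/
theorem rank_factorization_degree_lower_bound
    {F : Type*} [Field F] {m n r : ℕ}
    (P : Matrix (Fin m) (Fin n) F[X])
    (hrank : normalRank P = r) (hr0 : 0 < r)
    (Rm : Matrix (Fin r) (Fin n) F[X])
    (hRm : IsMinimalRowBasis Rm) (hRmspan : rowSpace Rm = rowSpace P)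
    (Lm : Matrix (Fin m) (Fin r) F[X])
    (hLm : IsMinimalColBasis Lm) (hLmspan : colSpace Lm = colSpace P) :
    (∀ (L : Matrix (Fin m) (Fin r) F[X]) (E : Matrix (Fin r) (Fin r) F[X])
        (R : Matrix (Fin r) (Fin n) F[X]), P = L * E * R →
        matDeg L + matDeg E + matDeg R ≥ matDeg L + matDeg R ∧
        matDeg L + matDeg R ≥ matDeg Rm + matDeg Lm) ∧
    (matDeg Rm + matDeg Lm > matDeg P →
      (∀ (L : Matrix (Fin m) (Fin r) F[X]) (E : Matrix (Fin r) (Fin r) F[X])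
          (R : Matrix (Fin r) (Fin n) F[X]), P = L * E * R →
          matDeg L + matDeg E + matDeg R ≠ matDeg P) ∧
      (∀ (L : Matrix (Fin m) (Fin r) F[X]) (R : Matrix (Fin r) (Fin n) F[X]),
          P = L * R → matDeg L + matDeg R ≠ matDeg P)) := by
  have hmin : ∀ (L : Matrix (Fin m) (Fin r) F[X]) (E : Matrix (Fin r) (Fin r) F[X])
      (R : Matrix (Fin r) (Fin n) F[X]), P = L * E * R →
      matDeg Rm + matDeg Lm ≤ matDeg L + matDeg R := by
    rintro L E R rfl
    have hR := hRm.matDeg_le_of_rowSpace_eq_mul hrank hRmspan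
    rw [Matrix.mul_assoc] at hrank hLmspan
    have hL := hLm.matDeg_le_of_colSpace_eq_mul hrank hLmspan
    rw [add_comm (matDeg L)]
    exact add_le_add hR hL
  have hmid : ∀ (L : Matrix (Fin m) (Fin r) F[X]) (E : Matrix (Fin r) (Fin r) F[X])
      (R : Matrix (Fin r) (Fin n) F[X]), P = L * E * R →
      matDeg L + matDeg R ≤ matDeg L + matDeg E + matDeg R := by
    rintro L E R rfl
    have hE : 0 ≤ matDeg E := by
      refine zero_le_matDeg_of_normalRank_pos (hr0.trans_le ?_)
      calc r = normalRank (L * E * R) := hrank.symm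
        _ ≤ normalRank E := (normalRank_mul_le_left _ _).trans (normalRank_mul_le_right _ _)
    calc matDeg L + matDeg R = matDeg L + 0 + matDeg R := by rw [add_zero]
      _ ≤ matDeg L + matDeg E + matDeg R := by gcongr
  refine ⟨fun L E R hP => ⟨hmid L E R hP, hmin L E R hP⟩, fun hgt => ⟨?_, ?_⟩⟩
  · rintro L E R hP hdeg
    exact ((hmin L E R hP).trans (hmid L E R hP)).not_gt (hdeg ▸ hgt)
  · rintro L R hP hdeg
    exact (hmin L 1 R (by rwa [Matrix.mul_one])).not_gt (hdeg ▸ hgt)
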